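/- arXiv:1910.10589 — 3 statements merged into one kernel-verified Lean document; each statement's English description precedes it below -/
import Mathlib

section
/- Invariance of the detrended walk to polynomial trend: let X : ℕ → ℝ, let p be a polynomial of degree at most ν, and set Y_t := X_t + p(t). Define the integrated signals R^X_t := ∑_{j=1}^t X_j and R^Y_t := ∑_{j=1}^t Y_j. Then for each box starting at i, the residual vectors of a least-squares fit by polynomials of degree ν+1 satisfy Q_{m+1}(R^Y_i, …, R^Y_{m+i})ᵀ = Q_{m+1}(R^X_i, …, R^X_{m+i})ᵀ, where Q_{m+1} := I − D(DᵀD)⁻¹Dᵀ and D is the (m+1)×(ν+2) Vandermonde-type design matrix with columns (1, t, …, t^{ν+1}) for t = 1,…,m+1. -/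
open Matrix BigOperators

/-- The Vandermonde-type design matrix with columns `(1, t, …, t^{ν+1})` for
`t = 1, …, m+1`. -/
def designMat (m ν : ℕ) : Matrix (Fin (m + 1)) (Fin (ν + 2)) ℝ :=
  fun t j => ((t : ℝ) + 1) ^ (j : ℕ)

/-!
The integrated trend `t ↦ ∑_{j=1}^t p(j)` is a polynomial in `t` of degree at most `ν + 1`
(Faulhaber), so on every box it is a combination of the columns of the design matrix `D`,
and the residual matrix `1 - D (Dᵀ D)⁻¹ Dᵀ` annihilates the column space of `D`.
-/

open Polynomial Finset

namespace Polynomial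

theorem natDegree_bernoulli_le (n : ℕ) : (bernoulli n).natDegree ≤ n :=
  natDegree_le_iff_coeff_eq_zero.mpr fun i hi => by
    rw [coeff_bernoulli, if_neg (by omega)]

variable {K : Type*} [Field K] [CharZero K]

theorem exists_eval_eq_sum_range_pow (ℓ : ℕ) :
    ∃ q : K[X], q.natDegree ≤ ℓ + 1 ∧
      ∀ n : ℕ, q.eval (n : K) = ∑ k ∈ range n, (k : K) ^ ℓ := by
  refine ⟨C ((ℓ + 1 : K)⁻¹) *
      ((bernoulli (ℓ + 1)).map (Rat.castHom K) - C (_root_.bernoulli (ℓ + 1) : K)), ?_, ?_⟩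
  · refine (natDegree_C_mul_le _ _).trans <| (natDegree_sub_le _ _).trans ?_
    simpa using (natDegree_map_le (f := Rat.castHom K)).trans (natDegree_bernoulli_le (ℓ + 1))
  · intro n
    have faulhaber := congrArg (Rat.cast : ℚ → K) (sum_range_pow_eq_bernoulli_sub n ℓ)
    push_cast at faulhaber
    rw [eval_mul, eval_C, eval_sub, eval_natCast_map, eval_C, Rat.coe_castHom, ← faulhaber,
      ← mul_assoc, inv_mul_cancel₀ (Nat.cast_add_one_ne_zero ℓ), one_mul]

theorem exists_eval_eq_sum_range (p : K[X]) :
    ∃ q : K[X], q.natDegree ≤ p.natDegree + 1 ∧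
      ∀ n : ℕ, q.eval (n : K) = ∑ k ∈ range n, p.eval (k : K) := by
  choose Q hQ_deg hQ_eval using exists_eval_eq_sum_range_pow (K := K)
  refine ⟨∑ ℓ ∈ range (p.natDegree + 1), C (p.coeff ℓ) * Q ℓ, ?_, fun n => ?_⟩
  · refine natDegree_sum_le_of_forall_le _ _ fun ℓ hℓ => (natDegree_C_mul_le _ _).trans ?_
    exact (hQ_deg ℓ).trans (by simpa using mem_range.mp hℓ)
  · simp_rw [eval_finsetSum, eval_mul, eval_C, hQ_eval, mul_sum,
      eval_eq_sum_range (p := p)]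
    exact sum_comm

theorem exists_eval_eq_sum_Icc (p : K[X]) :
    ∃ q : K[X], q.natDegree ≤ p.natDegree + 1 ∧
      ∀ n : ℕ, q.eval (n : K) = ∑ j ∈ Icc 1 n, p.eval (j : K) := by
  obtain ⟨q, hq_deg, hq_eval⟩ := exists_eval_eq_sum_range (taylor 1 p)
  refine ⟨q, by rwa [natDegree_taylor] at hq_deg, fun n => ?_⟩
  rw [hq_eval, ← Ico_add_one_right_eq_Icc, sum_Ico_eq_sum_range]
  simp [taylor_eval, add_comm]

end Polynomial

namespace Matrix

variable {m n R : Type*} [Fintype m] [DecidableEq m] [Fintype n] [DecidableEq n] [CommRing R]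

-- When `Aᵀ * A` is singular, `⁻¹` is the junk value `0` and this is `1`.
noncomputable def residualMaker (A : Matrix m n R) : Matrix m m R :=
  1 - A * (Aᵀ * A)⁻¹ * Aᵀ

theorem residualMaker_mul_self {A : Matrix m n R} (hA : IsUnit (Aᵀ * A)) :
    residualMaker A * A = 0 := by
  rw [residualMaker, Matrix.sub_mul, Matrix.one_mul, Matrix.mul_assoc, Matrix.mul_assoc,
    nonsing_inv_mul _ ((isUnit_iff_isUnit_det _).mp hA), Matrix.mul_one, sub_self]

theorem residualMaker_mulVec_add_mulVec {A : Matrix m n R} (hA : IsUnit (Aᵀ * A))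
    (x : m → R) (c : n → R) :
    residualMaker A *ᵥ (x + A *ᵥ c) = residualMaker A *ᵥ x := by
  rw [mulVec_add, mulVec_mulVec, residualMaker_mul_self hA, zero_mulVec, add_zero]

end Matrix

theorem designMat_mulVec_coeff {m ν : ℕ} {r : ℝ[X]} (hr : r.natDegree ≤ ν + 1) :
    designMat m ν *ᵥ (fun k => r.coeff k) = fun t : Fin (m + 1) => r.eval ((t : ℝ) + 1) := by
  funext t
  rw [eval_eq_sum_range' (Nat.lt_succ_of_le hr), ← Fin.sum_univ_eq_sum_range]
  simp [mulVec, dotProduct, designMat, mul_comm]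

theorem detrended_walk_invariant_to_polynomial_trend_general (m ν i : ℕ)
    (hD : IsUnit ((designMat m ν)ᵀ * designMat m ν))
    (X : ℕ → ℝ) (p : Polynomial ℝ) (hp : p.natDegree ≤ ν) :
    (1 - designMat m ν * ((designMat m ν)ᵀ * designMat m ν)⁻¹ * (designMat m ν)ᵀ) *ᵥ
        (fun t : Fin (m + 1) => ∑ j ∈ Finset.Icc 1 (i + t.val), (X j + p.eval (j : ℝ)))
      = (1 - designMat m ν * ((designMat m ν)ᵀ * designMat m ν)⁻¹ * (designMat m ν)ᵀ) *ᵥ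
        (fun t : Fin (m + 1) => ∑ j ∈ Finset.Icc 1 (i + t.val), X j) := by
  obtain ⟨q, hq_deg, hq_eval⟩ := exists_eval_eq_sum_Icc p
  -- `r (t + 1) = q (i + t)`: the integrated trend on the box starting at `i`
  set r := taylor ((i : ℝ) - 1) q
  have hr : r.natDegree ≤ ν + 1 := by rw [natDegree_taylor]; omega
  have hsplit : (fun t : Fin (m + 1) => ∑ j ∈ Icc 1 (i + t.val), (X j + p.eval (j : ℝ)))
      = (fun t : Fin (m + 1) => ∑ j ∈ Icc 1 (i + t.val), X j)
        + designMat m ν *ᵥ (fun k => r.coeff k) := by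
    rw [designMat_mulVec_coeff hr]
    funext t
    simp only [Pi.add_apply, sum_add_distrib, ← hq_eval, r, taylor_eval]
    push_cast
    congr 2
    ring
  rw [hsplit]
  exact residualMaker_mulVec_add_mulVec hD _ _

theorem detrended_walk_invariant_to_polynomial_trend (m ν i : ℕ) (hi : 1 ≤ i)
    (hD : IsUnit ((designMat m ν)ᵀ * designMat m ν))
    (X : ℕ → ℝ) (p : Polynomial ℝ) (hp : p.natDegree ≤ ν) :
    (1 - designMat m ν * ((designMat m ν)ᵀ * designMat m ν)⁻¹ * (designMat m ν)ᵀ) *ᵥ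
        (fun t : Fin (m + 1) => ∑ j ∈ Finset.Icc 1 (i + t.val), (X j + p.eval (j : ℝ)))
      = (1 - designMat m ν * ((designMat m ν)ᵀ * designMat m ν)⁻¹ * (designMat m ν)ᵀ) *ᵥ
        (fun t : Fin (m + 1) => ∑ j ∈ Finset.Icc 1 (i + t.val), X j) :=
  detrended_walk_invariant_to_polynomial_trend_general m ν i hD X p hp
end

section
/- Entries of K_{m+1} in the linear-fit case: let P_{m+1} be the orthogonal projection onto the span of (1,1,…,1) and (1,2,…,m+1) in ℝ^{m+1}, Q_{m+1} := I − P_{m+1}, J the (m+1)×(m+1) lower-triangular matrix of ones, and K_{m+1} := Jᵀ Q_{m+1} J. Then for all r, s ≥ 2, [K_{m+1}]_{r,s} = m + 2 − max{r,s} − (m+2−r)(m+2−s)[m² + 2m + 3(r−1)(s−1)] / (m(m+1)(m+2)), and [K_{m+1}]_{r,s} = 0 whenever r = 1 or s = 1. -/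
/-!
Indices are 0-based: `r : Fin (m + 1)` is the paper's index `r + 1`.

Since `Jᵀ (1 - D G⁻¹ Dᵀ) J = JᵀJ - (DᵀJ)ᵀ G⁻¹ (DᵀJ)` with `G = DᵀD`, everything reduces to
power sums. `(JᵀJ)_{rs}` counts the `t ≥ max r s`; the columns of `DᵀJ` are the tail sums
`∑_{t ≥ s} 1` and `∑_{t ≥ s} (t + 1)`; and `G` is an explicit `2 × 2` matrix of power sums with
determinant `(m + 1)² m (m + 2) / 12`. The resulting closed form, valid for all `r, s`, vanishes
when `r = 0` or `s = 0`: the first column of `J` is the constant column of `D`, which `Q` kills.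
-/

open Matrix

/-- The lower-triangular matrix of ones, `J_{r,s} = 1` iff `s ≤ r` (indices `1,…,m+1`). -/
def Jones (m : ℕ) : Matrix (Fin (m + 1)) (Fin (m + 1)) ℝ :=
  fun r s => if s ≤ r then 1 else 0

/-- The `(m+1) × 2` design matrix with rows `(1, t)` for `t = 1, …, m+1`. -/
def linDesign (m : ℕ) : Matrix (Fin (m + 1)) (Fin 2) ℝ :=
  fun t j => ((t : ℝ) + 1) ^ (j : ℕ)

/-- `Q_{m+1} = I − D(DᵀD)⁻¹Dᵀ` for the linear-fit design matrix. -/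
noncomputable def Qlin (m : ℕ) : Matrix (Fin (m + 1)) (Fin (m + 1)) ℝ :=
  1 - linDesign m * ((linDesign m)ᵀ * linDesign m)⁻¹ * (linDesign m)ᵀ

/-- `K_{m+1} := Jᵀ Q_{m+1} J`. -/
noncomputable def Kmat (m : ℕ) : Matrix (Fin (m + 1)) (Fin (m + 1)) ℝ :=
  (Jones m)ᵀ * Qlin m * Jones m

open Finset

lemma sum_range_cast_add_one (n : ℕ) : ∑ i ∈ range n, ((i : ℝ) + 1) = n * ((n : ℝ) + 1) / 2 := by
  induction n with
  | zero => simp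
  | succ n ih => rw [sum_range_succ, ih]; push_cast; ring

lemma sum_range_cast_add_one_sq (n : ℕ) :
    ∑ i ∈ range n, ((i : ℝ) + 1) ^ 2 = n * ((n : ℝ) + 1) * (2 * n + 1) / 6 := by
  induction n with
  | zero => simp
  | succ n ih => rw [sum_range_succ, ih]; push_cast; ring

lemma Fin.sum_ite_le_eq_sub {M : Type*} [AddCommGroup M] {n : ℕ} (c : Fin n) (f : ℕ → M) :
    ∑ a : Fin n, (if c ≤ a then f a else 0) = ∑ i ∈ range n, f i - ∑ i ∈ range c, f i := by
  simp only [Fin.le_def]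
  rw [Fin.sum_univ_eq_sum_range (fun i => if c.val ≤ i then f i else 0), ← sum_filter,
    ← sum_Ico_eq_sub _ c.isLt.le]
  congr 1
  ext i
  simp only [mem_filter, mem_range, mem_Ico]
  omega

lemma Matrix.transpose_mul_one_sub_mul {R k n p : Type*} [CommRing R] [Fintype k] [DecidableEq k]
    [Fintype n] (J : Matrix k p R) (D : Matrix k n R) (G : Matrix n n R) :
    Jᵀ * (1 - D * G * Dᵀ) * J = Jᵀ * J - (Dᵀ * J)ᵀ * G * (Dᵀ * J) := by
  simp only [Matrix.mul_sub, Matrix.sub_mul, Matrix.mul_one, Matrix.transpose_mul,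
    Matrix.transpose_transpose, Matrix.mul_assoc]

lemma linDesign_transpose_mul_self (m : ℕ) :
    (linDesign m)ᵀ * linDesign m =
      !![(m : ℝ) + 1, (m + 1) * (m + 2) / 2;
        (m + 1) * (m + 2) / 2, (m + 1) * (m + 2) * (2 * m + 3) / 6] := by
  have h1 : ∑ i : Fin (m + 1), ((i : ℝ) + 1) = (m + 1) * (m + 2) / 2 := by
    rw [Fin.sum_univ_eq_sum_range (fun i => (i : ℝ) + 1), sum_range_cast_add_one]
    push_cast
    ring
  have h2 : ∑ i : Fin (m + 1), ((i : ℝ) + 1) ^ 2 = ((m : ℝ) + 1) * (m + 2) * (2 * m + 3) / 6 := by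
    rw [Fin.sum_univ_eq_sum_range (fun i => ((i : ℝ) + 1) ^ 2), sum_range_cast_add_one_sq]
    push_cast
    ring
  ext i j
  fin_cases i <;> fin_cases j <;> simp [Matrix.mul_apply, linDesign, ← sq, h1, h2]

lemma inv_linDesign_transpose_mul_self (m : ℕ) (hm : 1 ≤ m) :
    ((linDesign m)ᵀ * linDesign m)⁻¹ =
      (12 / ((m : ℝ) * (m + 1) ^ 2 * (m + 2))) •
        !![((m : ℝ) + 1) * (m + 2) * (2 * m + 3) / 6, -(((m : ℝ) + 1) * (m + 2) / 2);
          -(((m : ℝ) + 1) * (m + 2) / 2), (m : ℝ) + 1] := by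
  have hm0 : (m : ℝ) ≠ 0 := by positivity
  rw [linDesign_transpose_mul_self]
  refine Matrix.inv_eq_right_inv ?_
  rw [Matrix.one_fin_two]
  ext i j
  fin_cases i <;> fin_cases j <;>
    simp only [Matrix.mul_apply, Fin.sum_univ_two, Matrix.smul_apply, smul_eq_mul, Matrix.of_apply,
      Matrix.cons_val', Matrix.cons_val_fin_one, Matrix.cons_val_zero, Matrix.cons_val_one,
      Fin.zero_eta, Fin.mk_one] <;>
    field_simp <;> ring

lemma Jones_transpose_mul_self_apply (m : ℕ) (r s : Fin (m + 1)) :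
    ((Jones m)ᵀ * Jones m) r s = (m : ℝ) + 1 - max (r : ℝ) s := by
  have hcount := Fin.sum_ite_le_eq_sub (M := ℝ) (max s r) (fun _ => 1)
  simp only [Matrix.mul_apply, Matrix.transpose_apply, Jones, mul_ite, mul_one, mul_zero,
    ← ite_and, ← max_le_iff, hcount, sum_const, card_range, nsmul_eq_mul, Fin.coe_max]
  push_cast
  rw [max_comm]

lemma linDesign_transpose_mul_Jones (m : ℕ) :
    (linDesign m)ᵀ * Jones m =
      Matrix.of ![fun s => (m : ℝ) + 1 - s.val,
        fun s => (((m : ℝ) + 1) * (m + 2) - s.val * (s.val + 1)) / 2] := by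
  ext j s
  have hcount := Fin.sum_ite_le_eq_sub (M := ℝ) s (fun _ => 1)
  have hsum := Fin.sum_ite_le_eq_sub s (fun i => (i : ℝ) + 1)
  simp only [sum_const, card_range, nsmul_eq_mul, mul_one, sum_range_cast_add_one] at hcount hsum
  fin_cases j <;>
    simp only [Matrix.mul_apply, Matrix.transpose_apply, linDesign, Jones, mul_ite, mul_one,
      mul_zero, Fin.zero_eta, Fin.mk_one, Fin.val_zero, Fin.val_one, pow_zero, pow_one, hcount, hsum,
      Matrix.of_apply, Matrix.cons_val_zero, Matrix.cons_val_one, Matrix.cons_val_fin_one] <;>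
    push_cast <;> ring

lemma Kmat_apply (m : ℕ) (hm : 1 ≤ m) (r s : Fin (m + 1)) :
    Kmat m r s =
      (m : ℝ) + 2 - max ((r : ℝ) + 1) ((s : ℝ) + 1) -
        ((m : ℝ) + 2 - ((r : ℝ) + 1)) * ((m : ℝ) + 2 - ((s : ℝ) + 1)) *
          ((m : ℝ) ^ 2 + 2 * m + 3 * (r : ℝ) * (s : ℝ)) /
        ((m : ℝ) * ((m : ℝ) + 1) * ((m : ℝ) + 2)) := by
  have hm0 : (m : ℝ) ≠ 0 := by positivity
  rw [Kmat, Qlin, Matrix.transpose_mul_one_sub_mul, inv_linDesign_transpose_mul_self m hm,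
    Matrix.sub_apply, Jones_transpose_mul_self_apply, linDesign_transpose_mul_Jones]
  simp only [Matrix.mul_apply, Fin.sum_univ_two, Matrix.transpose_apply, Matrix.smul_apply,
    Matrix.of_apply, Matrix.cons_val', Matrix.cons_val_fin_one, Matrix.cons_val_zero,
    Matrix.cons_val_one, smul_eq_mul]
  rw [max_add_add_right]
  field_simp
  ring

theorem Kmat_entries (m : ℕ) (hm : 1 ≤ m) (r s : Fin (m + 1)) :
    (1 ≤ r.val → 1 ≤ s.val →
      Kmat m r s =
        (m : ℝ) + 2 - max ((r.val : ℝ) + 1) ((s.val : ℝ) + 1) -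
          ((m : ℝ) + 2 - ((r.val : ℝ) + 1)) * ((m : ℝ) + 2 - ((s.val : ℝ) + 1)) *
              ((m : ℝ) ^ 2 + 2 * m + 3 * (r.val : ℝ) * (s.val : ℝ)) /
            ((m : ℝ) * ((m : ℝ) + 1) * ((m : ℝ) + 2))) ∧
    (r.val = 0 ∨ s.val = 0 → Kmat m r s = 0) := by
  refine ⟨fun _ _ => Kmat_apply m hm r s, fun h => ?_⟩
  have hm0 : (m : ℝ) ≠ 0 := by positivity
  have hle (t : Fin (m + 1)) : (1 : ℝ) ≤ t + 1 := le_add_of_nonneg_left t.val.cast_nonneg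
  rw [Kmat_apply m hm]
  rcases h with h | h
  · rw [h, Nat.cast_zero, zero_add, max_eq_right (hle s)]
    field_simp
    ring
  · rw [h, Nat.cast_zero, zero_add, max_eq_left (hle r)]
    field_simp
    ring
end

section
/- Sign change of the weights β_j^{(m)}: for the linear-detrending case, with β_j^{(m)} := α_j^{(m)}/α_0^{(m)}, one has 0 < β_j^{(m)} ≤ 1 for 0 ≤ j < j₀(m) and −1 ≤ β_j^{(m)} ≤ 0 for j₀(m) ≤ j < m, where j₀(m) = [√(105m² + 210m + 9) − 9(m+1)]/6. -/
/-- The closed form of `α_j^{(m)}` in the linear-detrending case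
(also valid for `j = 0`, where it reduces to `α_0^{(m)} = (m²+2m−3)/15`). -/
noncomputable def alphaF (j m : ℕ) : ℝ :=
  (((m : ℝ) - j) * ((m : ℝ) + 1 - j) * ((m : ℝ) + 2 - j) /
      ((m : ℝ) * ((m : ℝ) + 1) * ((m : ℝ) + 2))) *
    (((m : ℝ) ^ 2 + 2 * m - 3) / 15 - ((j : ℝ) ^ 2 + 3 * j * ((m : ℝ) + 1)) / 10)

/-- `β_j^{(m)} := α_j^{(m)} / α_0^{(m)}`. -/
noncomputable def betaF (j m : ℕ) : ℝ :=
  alphaF j m / (((m : ℝ) ^ 2 + 2 * m - 3) / 15)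

/-- The sign-change threshold `j₀(m) = [√(105m² + 210m + 9) − 9(m+1)]/6`. -/
noncomputable def j₀ (m : ℕ) : ℝ :=
  (Real.sqrt (105 * (m : ℝ) ^ 2 + 210 * m + 9) - 9 * ((m : ℝ) + 1)) / 6

/-!
Write `α_j = c(j) q(j)` with `c(t) = (m-t)(m+1-t)(m+2-t)/(m(m+1)(m+2))` and
`q(t) = (m²+2m-3)/15 - (t²+3t(m+1))/10`, so that `β_j = c(j) q(j) / q(0)`. On `0 ≤ t < m` the
cubic ratio lies in `(0, 1]`, while `q` decreases from `q(0) > 0` and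
`360 q(t) = (105m²+210m+9) - (6t+9(m+1))²`, so `q(t) > 0` exactly when `t < j₀(m)`. This gives
every bound except `β_j ≥ -1`, which is a polynomial inequality on `0 ≤ t ≤ m-1`.
-/

noncomputable def cubicRatio (M t : ℝ) : ℝ :=
  (M - t) * (M + 1 - t) * (M + 2 - t) / (M * (M + 1) * (M + 2))

noncomputable def quadraticPart (M t : ℝ) : ℝ :=
  (M ^ 2 + 2 * M - 3) / 15 - (t ^ 2 + 3 * t * (M + 1)) / 10

theorem betaF_eq_cubicRatio_mul (j m : ℕ) :
    betaF j m = cubicRatio m j * quadraticPart m j / quadraticPart m 0 := by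
  simp [betaF, alphaF, cubicRatio, quadraticPart]

section
variable {M t : ℝ}

theorem cubicRatio_pos (hM : 0 < M) (htM : t < M) : 0 < cubicRatio M t := by
  unfold cubicRatio
  exact div_pos (mul_pos (mul_pos (by linarith) (by linarith)) (by linarith)) (by positivity)

theorem cubicRatio_le_one (ht : 0 ≤ t) (htM : t ≤ M) : cubicRatio M t ≤ 1 := by
  have hM : 0 ≤ M := ht.trans htM
  apply div_le_one_of_le₀ _ (by positivity)
  have h₀ : 0 ≤ M - t := sub_nonneg.2 htM
  apply mul_le_mul (mul_le_mul _ _ _ _) _ _ _ <;> first | positivity | linarith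

theorem quadraticPart_le_quadraticPart_zero (hM : -1 ≤ M) (ht : 0 ≤ t) :
    quadraticPart M t ≤ quadraticPart M 0 := by
  unfold quadraticPart
  linarith [mul_nonneg ht (by linarith : 0 ≤ t + 3 * (M + 1))]

theorem quadraticPart_pos_iff (hM : 0 ≤ M) (ht : 0 ≤ t) :
    0 < quadraticPart M t ↔ t < (√(105 * M ^ 2 + 210 * M + 9) - 9 * (M + 1)) / 6 := by
  have hq : quadraticPart M t = (105 * M ^ 2 + 210 * M + 9 - (6 * t + 9 * (M + 1)) ^ 2) / 360 := by
    unfold quadraticPart; ring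
  rw [hq, lt_div_iff₀' (by norm_num : (0 : ℝ) < 6), div_pos_iff_of_pos_right (by norm_num),
    sub_pos, lt_sub_iff_add_lt, Real.lt_sqrt (by positivity)]

theorem neg_quadraticPart_zero_le_cubicRatio_mul (hM : 2 ≤ M) (ht : 0 ≤ t) (htM : t ≤ M - 1) :
    -quadraticPart M 0 ≤ cubicRatio M t * quadraticPart M t := by
  obtain ⟨b, hb, rfl⟩ : ∃ b, 0 ≤ b ∧ M = t + b + 1 := ⟨M - 1 - t, by linarith, by ring⟩
  unfold cubicRatio quadraticPart
  rw [div_mul_eq_mul_div, le_div_iff₀ (by positivity)]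
  -- in the coordinates `t, b ≥ 0` the difference of the two sides, times 30, is
  -- `12 t (t + b - 1)` plus a polynomial with nonnegative coefficients
  have hsplit : 0 ≤ 12 * t * (t + b - 1) := mul_nonneg (by positivity) (by linarith)
  have hrest : 0 ≤ 96*b + 200*b^2 + 140*b^3 + 40*b^4 + 4*b^5 + 48*t*b + 95*t*b^2
      + 40*t*b^3 + 5*t*b^4 + 28*t^2 + 100*t^2*b + 60*t^2*b^2 + 10*t^2*b^3 + 70*t^3
      + 80*t^3*b + 20*t^3*b^2 + 20*t^4 + 10*t^4*b + 2*t^5 := by positivity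
  linarith [hsplit, hrest]

end

theorem betaF_sign_change (m : ℕ) (hm : 2 ≤ m) :
    (∀ j : ℕ, j < m → (j : ℝ) < j₀ m → 0 < betaF j m ∧ betaF j m ≤ 1) ∧
    (∀ j : ℕ, j < m → j₀ m ≤ (j : ℝ) → -1 ≤ betaF j m ∧ betaF j m ≤ 0) := by
  have hM : (2 : ℝ) ≤ m := by exact_mod_cast hm
  have hq₀ : 0 < quadraticPart m 0 := by unfold quadraticPart; nlinarith
  have hpos_iff (j : ℕ) : 0 < quadraticPart m j ↔ (j : ℝ) < j₀ m :=
    quadraticPart_pos_iff (by positivity) j.cast_nonneg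
  have hj_le {j : ℕ} (hj : j < m) : (j : ℝ) ≤ m - 1 := by
    rw [le_sub_iff_add_le]; exact_mod_cast hj
  have hc_pos {j : ℕ} (hj : j < m) : 0 < cubicRatio m j :=
    cubicRatio_pos (by positivity) (by linarith [hj_le hj])
  refine ⟨fun j hj hj₀ => ?_, fun j hj hj₀ => ?_⟩ <;> rw [betaF_eq_cubicRatio_mul]
  · have hq := (hpos_iff j).2 hj₀
    refine ⟨div_pos (mul_pos (hc_pos hj) hq) hq₀, div_le_one_of_le₀ ?_ hq₀.le⟩
    have hc_le : cubicRatio m j ≤ 1 := cubicRatio_le_one j.cast_nonneg (by linarith [hj_le hj])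
    exact (mul_le_of_le_one_left hq.le hc_le).trans
      (quadraticPart_le_quadraticPart_zero (by linarith) j.cast_nonneg)
  · have hq : quadraticPart m j ≤ 0 := not_lt.1 <| (hpos_iff j).not.2 (not_lt.2 hj₀)
    refine ⟨?_, div_nonpos_of_nonpos_of_nonneg
      (mul_nonpos_of_nonneg_of_nonpos (hc_pos hj).le hq) hq₀.le⟩
    rw [le_div_iff₀ hq₀, neg_one_mul]
    exact neg_quadraticPart_zero_le_cubicRatio_mul hM j.cast_nonneg (hj_le hj)
end
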